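/- Suppose C ⊆ Q^m with q = |Q| ≥ 3, and {J_1,...,J_ℓ} is a partition of {1,...,m} into blocks of size k ≥ 3 with ℓ ≥ 2, such that π_{J_i}(C) = Rep(k,q) for all i (each projection is the repetition code). Assume C contains the all-ones vertex α = (1,...,1) and has minimum distance δ ≥ 3, with blocks J_i = {(i−1)k+1,...,ik}. Let μ agree with α except μ_1 = 2, μ_2 = 3, and let ν agree with α except ν_1 = 2, ν_{k+1} = 2. Then d(μ,C) = d(ν,C) = 2, but no automorphism of the form (h,...,h over each block)σ with σ preserving the block partition and acting constantly on blocks maps μ to ν. -/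

import Mathlib

/-!
Every codeword is constant on each block, because the block projections of `C` are repetition
codes. Distances split over blocks, and a block on which a word takes `s` distinct values is at
distance at least `s - 1` from any constant block. Hence `μ`, with three values in its first
block, and `ν`, with two values in each of its first two blocks, are at distance at least `2`
from `C`, and the codeword `α` attains `2`. The wreath action permutes the blocks and
relabels symbols bijectively inside each, so it maps constant blocks to constant blocks; `ν` has
two non-constant blocks while `μ` has only one.
-/

/-- Distance from a vertex to a code; coordinates are indexed by `Fin ℓ × Fin k`,
where the block `J_i` consists of the coordinates `(i, j)`, `j ∈ Fin k`. -/
noncomputable def distToCode {ℓ k q : ℕ} (C : Set (Fin ℓ × Fin k → Fin q))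
    (ν : Fin ℓ × Fin k → Fin q) : ℕ :=
  sInf {n | ∃ c ∈ C, hammingDist ν c = n}

open Finset Function

section Hamming

variable {ι κ β : Type*} [Fintype ι] [Fintype κ] [DecidableEq β]

theorem hammingDist_le_card_of_eqOn_compl {x y : ι → β} {s : Finset ι}
    (h : ∀ i ∉ s, x i = y i) : hammingDist x y ≤ #s :=
  card_le_card fun i hi => by_contra fun his => (mem_filter.1 hi).2 (h i his)

theorem card_sub_one_le_hammingDist_const {x : ι → β} {s : Finset β}
    (hs : ↑s ⊆ Set.range x) (a : β) : #s - 1 ≤ hammingDist x (fun _ => a) := by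
  have hsub : s.erase a ⊆ ({i | x i ≠ a} : Finset ι).image x := by
    intro b hb
    obtain ⟨hba, hbs⟩ := mem_erase.1 hb
    obtain ⟨i, rfl⟩ := hs hbs
    exact mem_image_of_mem x (mem_filter.2 ⟨mem_univ i, hba⟩)
  calc #s - 1 ≤ #(s.erase a) := pred_card_le_card_erase
    _ ≤ #(({i | x i ≠ a} : Finset ι).image x) := card_le_card hsub
    _ ≤ hammingDist x (fun _ => a) := card_image_le

theorem hammingDist_eq_sum_curry (x y : ι × κ → β) :
    hammingDist x y = ∑ i, hammingDist (curry x i) (curry y i) := by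
  simp only [hammingDist, card_filter]
  exact Fintype.sum_prod_type _

theorem card_mul_le_hammingDist_of_subset_range_curry {x c : ι × κ → β}
    (hc : ∀ i, ∃ a, curry c i = fun _ => a) (I : Finset ι) {s : Finset β}
    (hs : ∀ i ∈ I, ↑s ⊆ Set.range (curry x i)) : #I * (#s - 1) ≤ hammingDist x c := by
  rw [hammingDist_eq_sum_curry, ← smul_eq_mul, ← sum_const]
  refine (sum_le_sum fun i hi => ?_).trans (sum_le_sum_of_subset (subset_univ I))
  obtain ⟨a, ha⟩ := hc i
  rw [ha]
  exact card_sub_one_le_hammingDist_const (hs i hi) a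

end Hamming

theorem distToCode_eq_of_le {ℓ k q : ℕ} {C : Set (Fin ℓ × Fin k → Fin q)}
    {x c₀ : Fin ℓ × Fin k → Fin q} {n : ℕ} (hc₀ : c₀ ∈ C) (hup : hammingDist x c₀ ≤ n)
    (hlow : ∀ c ∈ C, n ≤ hammingDist x c) : distToCode C x = n :=
  IsLeast.csInf_eq ⟨⟨c₀, hc₀, le_antisymm hup (hlow c₀ hc₀)⟩,
    by rintro _ ⟨c, hc, rfl⟩; exact hlow c hc⟩

section Wreath

variable {ι κ β : Type*}

def wreathAct (h : ι → Equiv.Perm β) (τ : Equiv.Perm ι) (ρ : ι → Equiv.Perm κ)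
    (x : ι × κ → β) : ι × κ → β :=
  fun p => h (τ⁻¹ p.1) (x (τ⁻¹ p.1, (ρ (τ⁻¹ p.1))⁻¹ p.2))

theorem range_curry_wreathAct (h : ι → Equiv.Perm β) (τ : Equiv.Perm ι)
    (ρ : ι → Equiv.Perm κ) (x : ι × κ → β) (i : ι) :
    Set.range (curry (wreathAct h τ ρ x) i) = h (τ⁻¹ i) '' Set.range (curry x (τ⁻¹ i)) := by
  change Set.range (h (τ⁻¹ i) ∘ curry x (τ⁻¹ i) ∘ ⇑(ρ (τ⁻¹ i))⁻¹) = _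
  rw [Set.range_comp, (Equiv.surjective _).range_comp]

theorem wreathAct_ne_of_not_subsingleton {x y : ι × κ → β} {i₀ i₁ i₂ : ι}
    (hx : ∀ i ≠ i₀, (Set.range (curry x i)).Subsingleton)
    (hy₁ : ¬(Set.range (curry y i₁)).Subsingleton)
    (hy₂ : ¬(Set.range (curry y i₂)).Subsingleton) (h₁₂ : i₁ ≠ i₂)
    (h : ι → Equiv.Perm β) (τ : Equiv.Perm ι) (ρ : ι → Equiv.Perm κ) :
    wreathAct h τ ρ x ≠ y := by
  rintro rfl
  have hτ : ∀ i, ¬(Set.range (curry (wreathAct h τ ρ x) i)).Subsingleton → τ⁻¹ i = i₀ :=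
    fun i hi => by_contra fun hne =>
      hi ((range_curry_wreathAct h τ ρ x i).symm ▸ (hx _ hne).image _)
  exact h₁₂ (τ⁻¹.injective ((hτ i₁ hy₁).trans (hτ i₂ hy₂).symm))

end Wreath

theorem stmt_14 (ℓ k q : ℕ) (hq : 3 ≤ q) (hk : 3 ≤ k) (hℓ : 2 ≤ ℓ)
    (C : Set (Fin ℓ × Fin k → Fin q))
    -- each block projection of C is the repetition code Rep(k,q)
    (hproj : ∀ i : Fin ℓ,
      {f : Fin k → Fin q | ∃ c ∈ C, f = fun j => c (i, j)}
        = {f | ∃ a : Fin q, f = fun _ => a})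
    -- C contains the all-ones vertex α (0-based symbols)
    (hα : (fun _ => (⟨0, by omega⟩ : Fin q)) ∈ C)
    (μ ν : Fin ℓ × Fin k → Fin q)
    -- μ agrees with α except μ₁ = 2, μ₂ = 3 (both changes in the first block)
    (hμ : ∀ p : Fin ℓ × Fin k, μ p =
      if p.1.val = 0 ∧ p.2.val = 0 then ⟨1, by omega⟩
      else if p.1.val = 0 ∧ p.2.val = 1 then ⟨2, by omega⟩
      else ⟨0, by omega⟩)
    -- ν agrees with α except ν₁ = 2, ν_{k+1} = 2 (first entries of the first two blocks)
    (hν : ∀ p : Fin ℓ × Fin k, ν p =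
      if p.1.val ≤ 1 ∧ p.2.val = 0 then ⟨1, by omega⟩
      else ⟨0, by omega⟩) :
    distToCode C μ = 2 ∧ distToCode C ν = 2 ∧
    -- no element of Diag_k(S_q) ≀ S_ℓ (a single alphabet permutation within each
    -- block, with a partition-preserving coordinate permutation) maps μ to ν
    ∀ (h : Fin ℓ → Equiv.Perm (Fin q)) (τ : Equiv.Perm (Fin ℓ))
      (ρ : Fin ℓ → Equiv.Perm (Fin k)),
      (fun p : Fin ℓ × Fin k =>
        h (τ⁻¹ p.1) (μ (τ⁻¹ p.1, (ρ (τ⁻¹ p.1))⁻¹ p.2))) ≠ ν := by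
  have hrep : ∀ c ∈ C, ∀ i, ∃ a, curry c i = fun _ => a :=
    fun c hc i => (hproj i).subset ⟨c, hc, rfl⟩
  have hμ₀ : ↑({⟨0, by omega⟩, ⟨1, by omega⟩, ⟨2, by omega⟩} : Finset (Fin q)) ⊆
      Set.range (curry μ ⟨0, by omega⟩) := by
    simp only [coe_insert, coe_singleton, Set.insert_subset_iff, Set.singleton_subset_iff]
    exact ⟨⟨⟨2, by omega⟩, by simp [hμ]⟩, ⟨⟨0, by omega⟩, by simp [hμ]⟩,
      ⟨⟨1, by omega⟩, by simp [hμ]⟩⟩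
  have hμ_const : ∀ i : Fin ℓ, i ≠ ⟨0, by omega⟩ → (Set.range (curry μ i)).Subsingleton :=
    fun i hi => (Set.subsingleton_singleton (a := (⟨0, by omega⟩ : Fin q))).anti <|
      Set.range_subset_iff.2 fun j => by simp [hμ, Fin.ext_iff.not.1 hi]
  have hν₀₁ : ∀ i : Fin ℓ, i.val ≤ 1 →
      ↑({⟨0, by omega⟩, ⟨1, by omega⟩} : Finset (Fin q)) ⊆ Set.range (curry ν i) := by
    intro i hi
    simp only [coe_insert, coe_singleton, Set.insert_subset_iff, Set.singleton_subset_iff]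
    exact ⟨⟨⟨1, by omega⟩, by simp [hν]⟩, ⟨⟨0, by omega⟩, by simp [hν, hi]⟩⟩
  have hν_nonconst : ∀ i : Fin ℓ, i.val ≤ 1 → ¬(Set.range (curry ν i)).Subsingleton :=
    fun i hi => (Set.nontrivial_of_mem_mem_ne (x := ⟨0, by omega⟩) (y := ⟨1, by omega⟩)
      (hν₀₁ i hi (by simp)) (hν₀₁ i hi (by simp)) (Fin.ne_of_val_ne zero_ne_one)).not_subsingleton
  have hμα : hammingDist μ (fun _ => ⟨0, by omega⟩) ≤ 2 := by
    refine (hammingDist_le_card_of_eqOn_compl (s := {(⟨0, by omega⟩, ⟨0, by omega⟩),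
      (⟨0, by omega⟩, ⟨1, by omega⟩)}) fun p hp => ?_).trans card_le_two
    simp only [mem_insert, mem_singleton, Prod.ext_iff, Fin.ext_iff, not_or] at hp
    rw [hμ, if_neg hp.1, if_neg hp.2]
  have hνα : hammingDist ν (fun _ => ⟨0, by omega⟩) ≤ 2 := by
    refine (hammingDist_le_card_of_eqOn_compl (s := {(⟨0, by omega⟩, ⟨0, by omega⟩),
      (⟨1, by omega⟩, ⟨0, by omega⟩)}) fun p hp => ?_).trans card_le_two
    simp only [mem_insert, mem_singleton, Prod.ext_iff, Fin.ext_iff, not_or] at hp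
    rw [hν, if_neg (by omega)]
  refine ⟨distToCode_eq_of_le hα hμα fun c hc => ?_, distToCode_eq_of_le hα hνα fun c hc => ?_,
    wreathAct_ne_of_not_subsingleton hμ_const (hν_nonconst ⟨0, by omega⟩ (by simp))
      (hν_nonconst ⟨1, by omega⟩ le_rfl) (by simp [Fin.ext_iff])⟩
  · have h3 : #({⟨0, by omega⟩, ⟨1, by omega⟩, ⟨2, by omega⟩} : Finset (Fin q)) = 3 :=
      card_eq_three.2 ⟨_, _, _, by simp, by simp, by simp, rfl⟩
    have := card_mul_le_hammingDist_of_subset_range_curry (hrep c hc) {⟨0, by omega⟩}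
      fun i hi => (mem_singleton.1 hi) ▸ hμ₀
    rwa [h3, card_singleton] at this
  · simpa [Fin.ext_iff] using card_mul_le_hammingDist_of_subset_range_curry (hrep c hc)
      {⟨0, by omega⟩, ⟨1, by omega⟩}
      fun i hi => hν₀₁ i (by rcases mem_insert.1 hi with rfl | hi <;> simp_all)
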